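/- Let H be a connected graph which contains a cycle and which is not isomorphic to K₃. Then m₂(H) < Δ(H), where Δ(H) denotes the maximum degree of H. -/

import Mathlib

open MeasureTheory Filter

/-- The Bernoulli measure on `Bool` with success probability `p` (clamped to `[0,1]`). -/
noncomputable def bernoulliMeasure (p : ℝ) : Measure Bool :=
  (PMF.bernoulli (min 1 (Real.toNNReal p)) (min_le_left _ _)).toMeasure

/-- The product measure modelling the binomial random graph `G(n,p)`:
each potential edge slot (an element of `Sym2 (Fin n)`) carries an independent
Bernoulli(p) indicator. -/
noncomputable def gnp (n : ℕ) (p : ℝ) : Measure (Sym2 (Fin n) → Bool) :=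
  Measure.pi fun _ => bernoulliMeasure p

/-- The simple graph determined by an outcome of the edge indicators. -/
def graphOf {n : ℕ} (ω : Sym2 (Fin n) → Bool) : SimpleGraph (Fin n) :=
  SimpleGraph.fromEdgeSet {e | ω e = true}

/-- The 2-density `m₂(H)`: the maximum of `(e(H') - 1)/(v(H') - 2)` over all
subgraphs `H'` of `H` with at least 3 vertices. -/
noncomputable def m2 {β : Type*} (H : SimpleGraph β) : ℝ :=
  sSup {x | ∃ H' : H.Subgraph, 3 ≤ H'.verts.ncard ∧
    x = ((H'.edgeSet.ncard : ℝ) - 1) / ((H'.verts.ncard : ℝ) - 2)}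

/-- The chromatic number of `H` as a natural number. -/
noncomputable def chi {β : Type*} (H : SimpleGraph β) : ℕ := H.chromaticNumber.toNat

/-- `σ(H)`: the minimum size of the smallest colour class over all proper
colourings of `H` with `χ(H)` colours. -/
noncomputable def sigmaH {β : Type*} (H : SimpleGraph β) : ℕ :=
  sInf {s | ∃ C : H.Coloring (Fin (chi H)), ∃ i : Fin (chi H), s = Nat.card {v // C v = i}}

/-- The critical chromatic threshold `χ_cr(H) = (χ(H)-1)·v(H)/(v(H)-σ(H))`. -/
noncomputable def chiCr {β : Type*} [Fintype β] (H : SimpleGraph β) : ℝ :=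
  ((chi H : ℝ) - 1) * (Fintype.card β : ℝ) / ((Fintype.card β : ℝ) - (sigmaH H : ℝ))

/-- `f` is a copy of `H` in `G`, i.e. an embedding of the vertex set of `H`
into `G` mapping edges of `H` to edges of `G`. -/
def IsCopy {α β : Type*} (H : SimpleGraph β) (G : SimpleGraph α) (f : β → α) : Prop :=
  Function.Injective f ∧ ∀ u v : β, H.Adj u v → G.Adj (f u) (f v)

/-- `G` contains an `H`-packing (a family of pairwise vertex-disjoint copies of `H`)
covering all but at most `k` vertices of `G`. -/
def HasPackingCovering {α β : Type*} [Fintype β] (H : SimpleGraph β) (G : SimpleGraph α)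
    (k : ℝ) : Prop :=
  ∃ (m : ℕ) (f : Fin m → β → α),
    (∀ j, IsCopy H G (f j)) ∧
    (∀ j j', j ≠ j' → Disjoint (Set.range (f j)) (Set.range (f j'))) ∧
    ((Nat.card α : ℝ) ≤ (m : ℝ) * (Fintype.card β : ℝ) + k)

/-- The maximum degree of a graph. -/
noncomputable def maxDeg {β : Type*} (H : SimpleGraph β) : ℕ :=
  sSup {d : ℕ | ∃ v : β, d = (H.neighborSet v).ncard}

/-! If `H` has a cycle then `Δ(H) ≥ 2`, and every subgraph on `v ≥ 3` vertices with `e` edges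
satisfies `(e - 1)/(v - 2) ≤ Δ - 1/2`. For `v ≥ 4` this follows from the handshake bound
`2e ≤ vΔ`. For `v = 3` we have `e ≤ 3`, with equality only for a triangle; as `H` is connected
and not itself a triangle, some vertex of that triangle has a third neighbour, so `Δ ≥ 3`. -/

namespace SimpleGraph

variable {V : Type*} {G : SimpleGraph V}

lemma ncard_neighborSet_le_maxDeg [Finite V] (v : V) : (G.neighborSet v).ncard ≤ maxDeg G :=
  le_csSup ((Set.finite_range fun w => (G.neighborSet w).ncard).subset
    (by rintro _ ⟨w, rfl⟩; exact ⟨w, rfl⟩)).bddAbove ⟨v, rfl⟩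

lemma two_le_maxDeg_of_not_isAcyclic [Finite V] (h : ¬ G.IsAcyclic) : 2 ≤ maxDeg G := by
  obtain ⟨v, c, hc⟩ : ∃ v, ∃ c : G.Walk v v, c.IsCycle := by
    simpa [IsAcyclic] using h
  calc 2 = ({c.snd, c.penultimate} : Set V).ncard := (Set.ncard_pair hc.snd_ne_penultimate).symm
    _ ≤ (G.neighborSet v).ncard := by
      refine Set.ncard_le_ncard ?_ (Set.toFinite _)
      rintro _ (rfl | rfl)
      exacts [c.adj_snd hc.not_nil, (c.adj_penultimate hc.not_nil).symm]
    _ ≤ maxDeg G := ncard_neighborSet_le_maxDeg v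

lemma three_le_maxDeg_of_adj [Finite V] {v a b c : V} (ha : G.Adj v a) (hb : G.Adj v b)
    (hc : G.Adj v c) (hab : a ≠ b) (hac : a ≠ c) (hbc : b ≠ c) : 3 ≤ maxDeg G := by
  calc 3 = ({a, b, c} : Set V).ncard :=
        (Set.ncard_eq_three.mpr ⟨a, b, c, hab, hac, hbc, rfl⟩).symm
    _ ≤ (G.neighborSet v).ncard := by
      refine Set.ncard_le_ncard ?_ (Set.toFinite _)
      rintro _ (rfl | rfl | rfl) <;> assumption
    _ ≤ maxDeg G := ncard_neighborSet_le_maxDeg v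

lemma nonempty_iso_top_fin_three [Finite V] {a b c : V} (hab : G.Adj a b) (hac : G.Adj a c)
    (hbc : G.Adj b c) (hall : ∀ x, x = a ∨ x = b ∨ x = c) :
    Nonempty (G ≃g (⊤ : SimpleGraph (Fin 3))) := by
  have hcard : Nat.card V = 3 := by
    rw [← Set.ncard_univ, Set.ncard_eq_three]
    exact ⟨a, b, c, hab.ne, hac.ne, hbc.ne, (Set.eq_univ_of_forall (by simpa using hall)).symm⟩
  have hG : G = ⊤ := by
    ext u w
    refine ⟨Adj.ne, fun huw => ?_⟩
    rcases hall u with rfl | rfl | rfl <;> rcases hall w with rfl | rfl | rfl <;>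
      simp_all [adj_comm]
  exact ⟨hG ▸ Iso.completeGraph (Finite.equivFinOfCardEq hcard)⟩

lemma three_le_maxDeg_of_connected_of_adj [Finite V] (hconn : G.Connected)
    (hK3 : ¬ Nonempty (G ≃g (⊤ : SimpleGraph (Fin 3))))
    {a b c : V} (hab : G.Adj a b) (hac : G.Adj a c) (hbc : G.Adj b c) : 3 ≤ maxDeg G := by
  by_contra hlt
  refine hK3 (nonempty_iso_top_fin_three hab hac hbc fun d => ?_)
  by_contra hd
  obtain ⟨p⟩ := hconn.preconnected a d
  obtain ⟨⟨⟨x, y⟩, hxy⟩, -, hx, hy⟩ :=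
    p.exists_boundary_dart {a, b, c} (by simp) (by simpa using hd)
  simp only [Set.mem_insert_iff, Set.mem_singleton_iff, not_or] at hx hy
  obtain ⟨hya, hyb, hyc⟩ := hy
  rcases hx with rfl | rfl | rfl
  · exact hlt (three_le_maxDeg_of_adj hab hac hxy hbc.ne (Ne.symm hyb) (Ne.symm hyc))
  · exact hlt (three_le_maxDeg_of_adj hab.symm hbc hxy hac.ne (Ne.symm hya) (Ne.symm hyc))
  · exact hlt (three_le_maxDeg_of_adj hac.symm hbc.symm hxy hab.ne (Ne.symm hya) (Ne.symm hyb))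

lemma ncard_edgeSet_le_choose_two [Finite V] : G.edgeSet.ncard ≤ (Nat.card V).choose 2 := by
  classical
  cases nonempty_fintype V
  rw [← coe_edgeFinset, Set.ncard_coe_finset, Nat.card_eq_fintype_card]
  exact card_edgeFinset_le_card_choose_two

lemma eq_top_of_choose_two_le_ncard_edgeSet [Finite V]
    (h : (Nat.card V).choose 2 ≤ G.edgeSet.ncard) : G = ⊤ := by
  classical
  cases nonempty_fintype V
  rw [← coe_edgeFinset, Set.ncard_coe_finset, Nat.card_eq_fintype_card,
    ← card_edgeFinset_top_eq_card_choose_two] at h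
  exact edgeFinset_inj.mp (Finset.eq_of_subset_of_card_le (edgeFinset_mono le_top) h)

lemma two_mul_ncard_edgeSet_le [Finite V] {d : ℕ} (h : ∀ v, (G.neighborSet v).ncard ≤ d) :
    2 * G.edgeSet.ncard ≤ Nat.card V * d := by
  classical
  cases nonempty_fintype V
  rw [← coe_edgeFinset, Set.ncard_coe_finset, ← sum_degrees_eq_twice_card_edges,
    Nat.card_eq_fintype_card, ← Finset.card_univ, ← smul_eq_mul]
  refine Finset.sum_le_card_nsmul _ _ _ fun v _ => ?_
  rw [← card_neighborSet_eq_degree, ← Nat.card_eq_fintype_card, Nat.card_coe_set_eq]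
  exact h v

namespace Subgraph

lemma ncard_edgeSet_coe (H : G.Subgraph) : H.coe.edgeSet.ncard = H.edgeSet.ncard := by
  rw [← H.image_coe_edgeSet_coe, Set.ncard_image_of_injective _
    (Sym2.map.injective Subtype.val_injective)]

lemma two_mul_ncard_edgeSet_le [Finite V] (H : G.Subgraph) :
    2 * H.edgeSet.ncard ≤ H.verts.ncard * maxDeg G := by
  rw [← ncard_edgeSet_coe, ← Nat.card_coe_set_eq]
  refine SimpleGraph.two_mul_ncard_edgeSet_le fun v => ?_
  calc (H.coe.neighborSet v).ncard = (H.neighborSet v).ncard := by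
        rw [← Nat.card_coe_set_eq, Nat.card_congr (coeNeighborSetEquiv v), Nat.card_coe_set_eq]
    _ ≤ (G.neighborSet v).ncard := Set.ncard_le_ncard (H.neighborSet_subset v) (Set.toFinite _)
    _ ≤ maxDeg G := ncard_neighborSet_le_maxDeg (v : V)

lemma ncard_edgeSet_le_choose_two [Finite V] (H : G.Subgraph) :
    H.edgeSet.ncard ≤ H.verts.ncard.choose 2 := by
  rw [← ncard_edgeSet_coe, ← Nat.card_coe_set_eq]
  exact SimpleGraph.ncard_edgeSet_le_choose_two

lemma adj_of_choose_two_le_ncard_edgeSet [Finite V] (H : G.Subgraph)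
    (h : H.verts.ncard.choose 2 ≤ H.edgeSet.ncard) {a b : V} (ha : a ∈ H.verts)
    (hb : b ∈ H.verts) (hab : a ≠ b) : G.Adj a b := by
  rw [← ncard_edgeSet_coe, ← Nat.card_coe_set_eq] at h
  have hadj : H.coe.Adj ⟨a, ha⟩ ⟨b, hb⟩ := by
    rw [eq_top_of_choose_two_le_ncard_edgeSet h]
    simpa using hab
  exact H.adj_sub hadj

lemma three_le_maxDeg_of_ncard_verts_eq_three [Finite V] (hconn : G.Connected)
    (hK3 : ¬ Nonempty (G ≃g (⊤ : SimpleGraph (Fin 3)))) (H : G.Subgraph)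
    (hv : H.verts.ncard = 3) (he : 3 ≤ H.edgeSet.ncard) : 3 ≤ maxDeg G := by
  obtain ⟨a, b, c, hab, hac, hbc, hverts⟩ := Set.ncard_eq_three.mp hv
  have hadj {x y : V} (hx : x ∈ ({a, b, c} : Set V)) (hy : y ∈ ({a, b, c} : Set V)) :
      x ≠ y → G.Adj x y :=
    H.adj_of_choose_two_le_ncard_edgeSet (by rwa [hv]) (hverts ▸ hx) (hverts ▸ hy)
  exact three_le_maxDeg_of_connected_of_adj hconn hK3 (hadj (by simp) (by simp) hab)
    (hadj (by simp) (by simp) hac) (hadj (by simp) (by simp) hbc)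

lemma ratio_le_maxDeg_sub_half [Finite V] (hconn : G.Connected)
    (hK3 : ¬ Nonempty (G ≃g (⊤ : SimpleGraph (Fin 3)))) (hΔ : 2 ≤ maxDeg G) (H : G.Subgraph)
    (hv : 3 ≤ H.verts.ncard) :
    ((H.edgeSet.ncard : ℝ) - 1) / ((H.verts.ncard : ℝ) - 2) ≤ maxDeg G - 1 / 2 := by
  have hv' : (3 : ℝ) ≤ H.verts.ncard := by exact_mod_cast hv
  have hΔ' : (2 : ℝ) ≤ maxDeg G := by exact_mod_cast hΔ
  rw [div_le_iff₀ (by linarith)]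
  rcases hv.eq_or_lt with hv3 | hv4
  · have he : H.edgeSet.ncard ≤ 3 := by simpa [← hv3] using H.ncard_edgeSet_le_choose_two
    rw [← hv3]
    rcases Nat.lt_or_ge H.edgeSet.ncard 3 with he2 | he3
    · have : (H.edgeSet.ncard : ℝ) ≤ 2 := by exact_mod_cast Nat.le_of_lt_succ he2
      push_cast
      linarith
    · have hΔ3 : (3 : ℝ) ≤ maxDeg G := by
        exact_mod_cast H.three_le_maxDeg_of_ncard_verts_eq_three hconn hK3 hv3.symm he3
      have : (H.edgeSet.ncard : ℝ) ≤ 3 := by exact_mod_cast he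
      push_cast
      linarith
  · have hv4' : (4 : ℝ) ≤ H.verts.ncard := by exact_mod_cast hv4
    have he : 2 * (H.edgeSet.ncard : ℝ) ≤ H.verts.ncard * maxDeg G := by
      exact_mod_cast H.two_mul_ncard_edgeSet_le
    -- `(Δ - 1/2)(v - 2) - (vΔ/2 - 1) = (v - 4)(Δ - 1)/2`
    nlinarith [mul_nonneg (sub_nonneg.2 hv4') (by linarith : (0 : ℝ) ≤ maxDeg G - 1)]

end Subgraph

lemma m2_le {c : ℝ} (hc : 0 ≤ c)
    (h : ∀ H : G.Subgraph, 3 ≤ H.verts.ncard →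
      ((H.edgeSet.ncard : ℝ) - 1) / ((H.verts.ncard : ℝ) - 2) ≤ c) : m2 G ≤ c :=
  Real.sSup_le (by rintro _ ⟨H, hv, rfl⟩; exact h H hv) hc

end SimpleGraph

/-- For every connected graph `H` which contains a cycle and is not isomorphic to `K₃`,
we have `m₂(H) < Δ(H)`. -/
theorem statement_12 {β : Type} [Fintype β] (H : SimpleGraph β) (hconn : H.Connected)
    (hcyc : ¬ H.IsAcyclic) (hK3 : ¬ Nonempty (H ≃g (⊤ : SimpleGraph (Fin 3)))) :
    m2 H < (maxDeg H : ℝ) := by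
  have hΔ : 2 ≤ maxDeg H := H.two_le_maxDeg_of_not_isAcyclic hcyc
  have hΔ' : (2 : ℝ) ≤ maxDeg H := by exact_mod_cast hΔ
  calc m2 H ≤ maxDeg H - 1 / 2 :=
        H.m2_le (by linarith) fun H' => H'.ratio_le_maxDeg_sub_half hconn hK3 hΔ
    _ < maxDeg H := by linarith
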